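/- Let (V_a)_{a∈ℝ} be a family of modules over a commutative ring with structure maps ι_{a,b} : V_a → V_b for a ≤ b satisfying ι_{a,a} = id and ι_{b,c} ∘ ι_{a,b} = ι_{a,c}, together with bilinear products μ_{a,b} : V_a × V_b → V_{a+b} compatible with the structure maps in the sense that ι_{a+b, a'+b'}(μ_{a,b}(x,y)) = μ_{a',b'}(ι_{a,a'}(x), ι_{b,b'}(y)) for a ≤ a', b ≤ b'. Suppose there is ζ ∈ V_0 such that μ_{a,0}(x, ζ) = x for all a and all x ∈ V_a, and suppose ι_{0,c}(ζ) = 0 for some c > 0. Then the structure map ι_{a, a+c} : V_a → V_{a+c} is the zero map for every a ∈ ℝ. -/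

import Mathlib

theorem unit_death_implies_uniform_instability {R : Type*} [CommRing R]
    (V : ℝ → Type*) [∀ a, AddCommGroup (V a)] [∀ a, Module R (V a)]
    (ι : ∀ a b : ℝ, a ≤ b → (V a →ₗ[R] V b))
    (hcomp : ∀ (a b c : ℝ) (hab : a ≤ b) (hbc : b ≤ c),
      (ι b c hbc).comp (ι a b hab) = ι a c (hab.trans hbc))
    (μ : ∀ a b : ℝ, V a →ₗ[R] V b →ₗ[R] V (a + b))
    (hμι : ∀ (a a' b b' : ℝ) (ha : a ≤ a') (hb : b ≤ b') (x : V a) (y : V b),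
      ι (a + b) (a' + b') (add_le_add ha hb) (μ a b x y) =
        μ a' b' (ι a a' ha x) (ι b b' hb y))
    (ζ : V 0)
    (hunit : ∀ (a : ℝ) (x : V a),
      μ a 0 x ζ = ι a (a + 0) (le_of_eq (add_zero a).symm) x)
    (c : ℝ) (hc : 0 < c) (hζ : ι 0 c hc.le ζ = 0) :
    ∀ (a : ℝ) (x : V a), ι a (a + c) (by linarith) x = 0 := by
  intro a x
  calc ι a (a + c) _ x
      = ι (a + 0) (a + c) (add_le_add le_rfl hc.le) (ι a (a + 0) (add_zero a).ge x) := by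
        rw [← LinearMap.comp_apply, hcomp]
    _ = ι (a + 0) (a + c) (add_le_add le_rfl hc.le) (μ a 0 x ζ) := by rw [hunit]
    _ = μ a c (ι a a le_rfl x) (ι 0 c hc.le ζ) := hμι a a 0 c le_rfl hc.le x ζ
    _ = 0 := by rw [hζ, map_zero]
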